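/- There is a universal constant c such that every monotone circuit C in zero-suppressed semantics that is upwards-deterministic admits a monotone circuit C' with S(C') = S(C), every gate of C' having fan-in at most two, |C'| ≤ c·|C|, such that C' is upwards-deterministic; moreover, if C is a d-DNNF in zero-suppressed semantics then C' can be chosen to also be one. -/

import Mathlib

/-- The type of a gate in a monotone circuit: variable gate, AND-gate, or OR-gate. -/
inductive GateType : Type
  | var
  | and
  | or
  deriving DecidableEq

/-- A monotone circuit: a finite DAG of gates with wires, a distinguished output gate,
each gate labeled as a variable gate (carrying a variable label in `ι`), an AND-gate,
or an OR-gate.  Variable gates have no inputs, and the wire relation is acyclic. -/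
structure Circuit (ι : Type) [DecidableEq ι] where
  Gate : Type
  fintypeGate : Fintype Gate
  decEqGate : DecidableEq Gate
  wire : Gate → Gate → Prop
  decWire : ∀ a b : Gate, Decidable (wire a b)
  typ : Gate → GateType
  vlab : Gate → ι
  output : Gate
  var_no_input : ∀ g g' : Gate, typ g' = GateType.var → ¬ wire g g'
  acyclic : ∀ g : Gate, ¬ Relation.TransGen wire g g

attribute [instance] Circuit.fintypeGate Circuit.decEqGate Circuit.decWire

namespace Circuit

variable {ι : Type} [DecidableEq ι]

/-- The inputs of a gate `g`: the gates with a wire to `g`. -/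
def inputs (C : Circuit ι) (g : C.Gate) : Finset C.Gate :=
  Finset.univ.filter fun g' => C.wire g' g

/-- The fan-in of a gate: its number of inputs. -/
def fanin (C : Circuit ι) (g : C.Gate) : ℕ :=
  (C.inputs g).card

/-- The gates that `g` is an input of. -/
def outs (C : Circuit ι) (g : C.Gate) : Finset C.Gate :=
  Finset.univ.filter fun g' => C.wire g g'

/-- The size of a circuit: its number of gates plus its number of wires. -/
noncomputable def size (C : Circuit ι) : ℕ :=
  Fintype.card C.Gate + {p : C.Gate × C.Gate | C.wire p.1 p.2}.ncard

/-- Zero-suppressed semantics: `Captures C g t` says that the assignment `t`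
(a finite set of variables) belongs to the set captured by gate `g`, defined bottom-up:
a variable gate captures exactly its own singleton; an AND-gate captures the unions of
assignments captured by its inputs (one from each input); an OR-gate captures the union
of the sets captured by its inputs. -/
inductive Captures (C : Circuit ι) : C.Gate → Finset ι → Prop
  | var (g : C.Gate) (h : C.typ g = GateType.var) : Captures C g {C.vlab g}
  | and (g : C.Gate) (h : C.typ g = GateType.and) (f : C.Gate → Finset ι)
      (hf : ∀ g' ∈ C.inputs g, Captures C g' (f g')) :
      Captures C g ((C.inputs g).biUnion f)
  | or (g : C.Gate) (h : C.typ g = GateType.or) (g' : C.Gate) (hg' : g' ∈ C.inputs g)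
      (t : Finset ι) (ht : Captures C g' t) : Captures C g t

/-- The set `S(g)` of assignments captured by a gate `g` in zero-suppressed semantics. -/
def S (C : Circuit ι) (g : C.Gate) : Set (Finset ι) :=
  {t | C.Captures g t}

/-- The captured set `S(C)` of the circuit: the captured set of its output gate. -/
def captured (C : Circuit ι) : Set (Finset ι) :=
  C.S C.output

/-- `C.Reaches g g'` holds when there is a (possibly empty) directed path of wires
from `g` to `g'`. -/
def Reaches (C : Circuit ι) : C.Gate → C.Gate → Prop :=
  Relation.ReflTransGen C.wire

/-- An AND-gate is decomposable if no variable gate has directed paths to two distinct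
inputs of it. -/
def DecomposableAnd (C : Circuit ι) (g : C.Gate) : Prop :=
  ∀ v g1 g2 : C.Gate, C.typ v = GateType.var → g1 ∈ C.inputs g → g2 ∈ C.inputs g →
    g1 ≠ g2 → C.Reaches v g1 → C.Reaches v g2 → False

/-- An OR-gate is deterministic if the captured sets of any two distinct inputs
are disjoint. -/
def DeterministicOr (C : Circuit ι) (g : C.Gate) : Prop :=
  ∀ g1 g2 : C.Gate, g1 ∈ C.inputs g → g2 ∈ C.inputs g → g1 ≠ g2 →
    Disjoint (C.S g1) (C.S g2)

/-- A circuit is a d-DNNF in zero-suppressed semantics if every AND-gate is decomposable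
and every OR-gate is deterministic. -/
def dDNNF (C : Circuit ι) : Prop :=
  (∀ g : C.Gate, C.typ g = GateType.and → C.DecomposableAnd g) ∧
  (∀ g : C.Gate, C.typ g = GateType.or → C.DeterministicOr g)

/-- Distinct variable gates carry distinct variable labels (i.e., variables can be
identified with variable gates, as in the paper). -/
def VarInj (C : Circuit ι) : Prop :=
  Set.InjOn C.vlab {g : C.Gate | C.typ g = GateType.var}

/-- `C` is ∅-pruned: every gate captures a nonempty set (no gate is unsatisfiable). -/
def EmptyPruned (C : Circuit ι) : Prop :=
  ∀ g : C.Gate, (C.S g).Nonempty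

/-- `C` is {}-pruned: no gate captures a set containing the empty assignment. -/
def ZeroPruned (C : Circuit ι) : Prop :=
  ∀ g : C.Gate, (∅ : Finset ι) ∉ C.S g

/-- An exit: an OR-gate having an input which is not an OR-gate. -/
def IsExit (C : Circuit ι) (g : C.Gate) : Prop :=
  C.typ g = GateType.or ∧ ∃ g' ∈ C.inputs g, C.typ g' ≠ GateType.or

/-- A normal circuit: arity-two, ∅-pruned, {}-pruned, collapsed, and discriminative. -/
def Normal (C : Circuit ι) : Prop :=
  (∀ g : C.Gate, C.fanin g ≤ 2) ∧
  C.EmptyPruned ∧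
  C.ZeroPruned ∧
  (∀ g : C.Gate, C.typ g = GateType.and → C.fanin g ≠ 1) ∧
  (∀ g : C.Gate, C.IsExit g →
    C.fanin g = 1 ∧ (C.outs g).card = 1 ∧ ∀ g' : C.Gate, C.wire g g' → C.typ g' = GateType.or)

/-- A wire both of whose endpoints are OR-gates. -/
def orWire (C : Circuit ι) (a b : C.Gate) : Prop :=
  C.wire a b ∧ C.typ a = GateType.or ∧ C.typ b = GateType.or

/-- The OR-component of an OR-gate `g`: the OR-gates connected to `g` by paths
traversing, in either direction, only wires both of whose endpoints are OR-gates. -/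
def orComponent (C : Circuit ι) (g : C.Gate) : Set C.Gate :=
  {g' : C.Gate | C.typ g' = GateType.or ∧
    Relation.ReflTransGen (fun x y => C.orWire x y ∨ C.orWire y x) g g'}

/-- The exits of an OR-gate `g`: the exits of its OR-component having a directed path
to `g` within the OR-component. -/
def exitsOf (C : Circuit ι) (g : C.Gate) : Set C.Gate :=
  {e : C.Gate | C.IsExit e ∧ Relation.ReflTransGen C.orWire e g}

/-- An OR-path of `C`: a directed path (of length at least one) all of whose
intermediate gates are OR-gates. -/
inductive OrPath (C : Circuit ι) : C.Gate → C.Gate → Prop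
  | single (a b : C.Gate) (h : C.wire a b) : OrPath C a b
  | step (a m b : C.Gate) (h : C.wire a m) (hm : C.typ m = GateType.or)
      (hp : OrPath C m b) : OrPath C a b

/-- A gate is 0-valid if it captures the empty assignment. -/
def ZeroValid (C : Circuit ι) (g : C.Gate) : Prop :=
  (∅ : Finset ι) ∈ C.S g

/-- A wire `(g, g')` is pure if `g'` is an OR-gate, or `g'` is an AND-gate all of whose
other inputs are 0-valid. -/
def PureWire (C : Circuit ι) (g g' : C.Gate) : Prop :=
  C.wire g g' ∧
    (C.typ g' = GateType.or ∨
      (C.typ g' = GateType.and ∧ ∀ h ∈ C.inputs g', h ≠ g → C.ZeroValid h))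

/-- A gate `g` is upwards-deterministic if it is unsatisfiable or there is at most one
gate `g'` such that `(g, g')` is a pure wire. -/
def UpDetGate (C : Circuit ι) (g : C.Gate) : Prop :=
  C.S g = ∅ ∨ ∀ g1 g2 : C.Gate, C.PureWire g g1 → C.PureWire g g2 → g1 = g2

/-- A circuit is upwards-deterministic if all its AND-gates and OR-gates are. -/
def UpwardsDeterministic (C : Circuit ι) : Prop :=
  ∀ g : C.Gate, (C.typ g = GateType.and ∨ C.typ g = GateType.or) → C.UpDetGate g

end Circuit

/-!
Each gate `g` of fan-in `k ≥ 2` gets as its only input the top of a comb of `k - 1` new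
gates of the type of `g`, with fan-in two: the `p`-th one combines the `p`-th input of `g`
with the comb gate for the inputs after it, and the last one combines the last two inputs.
This preserves the captured sets, and decomposability and determinism pass from `g` to its
comb.

A comb gate has a single outgoing wire, and an input `x` of `g` feeds a single gate of the
comb of `g`, so upwards-determinism can only break if the wire from `x` into the comb is pure
while `(x, g)` is not. Listing the 0-valid inputs of `g` first rules this out: the sibling of
`x` in its comb gate is 0-valid only if the last input of `g`, or the one before it when `x`
is the last, is 0-valid, and then so are all inputs of `g` other than `x`.

The new circuit has at most `|C|` gates, of fan-in at most two, hence size at most `3 |C|`.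
-/

lemma List.getElem_append_of_le_of_forall {α : Type*} {P : α → Prop} {l₁ l₂ : List α}
    (h₁ : ∀ x ∈ l₁, P x) (h₂ : ∀ x ∈ l₂, ¬ P x) {i j : ℕ} (hij : i ≤ j)
    (hj : j < (l₁ ++ l₂).length) (hP : P (l₁ ++ l₂)[j]) : P (l₁ ++ l₂)[i] := by
  by_cases hi : i < l₁.length
  · rw [List.getElem_append_left hi]
    exact h₁ _ (List.getElem_mem _)
  · rw [List.getElem_append_right (by omega)] at hP
    exact absurd hP (h₂ _ (List.getElem_mem _))

namespace GateType

variable {ι : Type} [DecidableEq ι]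

/-- The variable type gets the OR-operation as a junk value. -/
def combine : GateType → Set (Finset ι) → Set (Finset ι) → Set (Finset ι)
  | .and, A, B => Set.image2 (· ∪ ·) A B
  | _, A, B => A ∪ B

def neutral : GateType → Set (Finset ι)
  | .and => {∅}
  | _ => ∅

def eval (t : GateType) (L : List (Set (Finset ι))) : Set (Finset ι) :=
  L.foldr t.combine t.neutral

lemma eval_nil (t : GateType) : t.eval ([] : List (Set (Finset ι))) = t.neutral := rfl

lemma eval_cons (t : GateType) (A : Set (Finset ι)) (L : List (Set (Finset ι))) :
    t.eval (A :: L) = t.combine A (t.eval L) := rfl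

@[simp] lemma eval_singleton (t : GateType) (A : Set (Finset ι)) : t.eval [A] = A := by
  cases t <;> simp [eval, combine, neutral, Set.image2_singleton_right]

lemma eval_pair (t : GateType) (A : Set (Finset ι)) (L : List (Set (Finset ι))) :
    t.eval [A, t.eval L] = t.eval (A :: L) := by
  rw [eval_cons, eval_singleton, eval_cons]

lemma mem_eval_or {L : List (Set (Finset ι))} {s : Finset ι} :
    s ∈ GateType.or.eval L ↔ ∃ A ∈ L, s ∈ A := by
  induction L with
  | nil => simp [eval_nil, neutral]
  | cons A L ih => simp [eval_cons, combine, ih]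

lemma empty_mem_eval_and {L : List (Set (Finset ι))} :
    ∅ ∈ GateType.and.eval L ↔ ∀ A ∈ L, ∅ ∈ A := by
  induction L with
  | nil => simp [eval_nil, neutral]
  | cons A L ih => simp [eval_cons, combine, ih]

lemma eval_and_map {α : Type} [DecidableEq α] {l : List α} (hl : l.Nodup)
    (F : α → Set (Finset ι)) :
    GateType.and.eval (l.map F) =
      {s | ∃ f : α → Finset ι, (∀ x ∈ l, f x ∈ F x) ∧ s = l.toFinset.biUnion f} := by
  induction l with
  | nil => ext s; simp [eval_nil, neutral]
  | cons x l ih =>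
    obtain ⟨hx, hl⟩ := List.nodup_cons.mp hl
    ext s
    simp only [List.map_cons, eval_cons, combine, ih hl, Set.mem_image2, Set.mem_ofPred_eq,
      List.mem_cons, forall_eq_or_imp, List.toFinset_cons, Finset.biUnion_insert]
    constructor
    · rintro ⟨a, ha, _, ⟨f, hf, rfl⟩, rfl⟩
      refine ⟨Function.update f x a, ⟨by simpa, fun y hy => ?_⟩, ?_⟩
      · rw [Function.update_of_ne (by rintro rfl; exact hx hy)]; exact hf y hy
      · rw [Function.update_self]
        congr 1
        refine Finset.biUnion_congr rfl fun y hy => ?_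
        rw [Function.update_of_ne (by rintro rfl; exact hx (List.mem_toFinset.mp hy))]
    · rintro ⟨f, ⟨hfx, hf⟩, rfl⟩
      exact ⟨f x, hfx, _, ⟨f, hf, rfl⟩, rfl⟩

end GateType

namespace Circuit

variable {ι : Type} [DecidableEq ι]

section Semantics

variable (C : Circuit ι)

lemma mem_inputs {a g : C.Gate} : a ∈ C.inputs g ↔ C.wire a g := by
  simp [inputs]

lemma inputs_eq_empty_of_var {g : C.Gate} (h : C.typ g = .var) : C.inputs g = ∅ := by
  ext a
  simpa [mem_inputs] using C.var_no_input a g h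

lemma fanin_eq_zero_of_var {g : C.Gate} (h : C.typ g = .var) : C.fanin g = 0 := by
  simp [fanin, C.inputs_eq_empty_of_var h]

lemma S_of_var {g : C.Gate} (h : C.typ g = .var) : C.S g = {{C.vlab g}} := by
  ext t
  constructor
  · rintro (_ | ⟨_, h', _⟩ | ⟨_, h'⟩) <;> simp_all
  · rintro rfl
    exact .var g h

lemma mem_S_and {g : C.Gate} (h : C.typ g = .and) {t : Finset ι} :
    t ∈ C.S g ↔ ∃ f : C.Gate → Finset ι,
      (∀ x ∈ C.inputs g, f x ∈ C.S x) ∧ t = (C.inputs g).biUnion f := by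
  constructor
  · rintro (⟨_, h'⟩ | ⟨_, _, f, hf⟩ | ⟨_, h'⟩)
    · simp_all
    · exact ⟨f, hf, rfl⟩
    · simp_all
  · rintro ⟨f, hf, rfl⟩
    exact .and g h f hf

lemma mem_S_or {g : C.Gate} (h : C.typ g = .or) {t : Finset ι} :
    t ∈ C.S g ↔ ∃ x ∈ C.inputs g, t ∈ C.S x := by
  constructor
  · rintro (⟨_, h'⟩ | ⟨_, h'⟩ | ⟨_, _, x, hx, _, ht⟩)
    · simp_all
    · simp_all
    · exact ⟨x, hx, ht⟩
  · rintro ⟨x, hx, ht⟩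
    exact .or g h x hx t ht

lemma S_eq_eval {g : C.Gate} (hg : C.typ g ≠ .var) {l : List C.Gate} (hl : l.Nodup)
    (hinputs : l.toFinset = C.inputs g) : C.S g = (C.typ g).eval (l.map C.S) := by
  rcases htyp : C.typ g with _ | _ | _
  · exact absurd htyp hg
  · ext t
    rw [GateType.eval_and_map hl, C.mem_S_and htyp, hinputs]
    simp only [Set.mem_ofPred_eq, ← hinputs, List.mem_toFinset]
  · ext t
    simp [C.mem_S_or htyp, GateType.mem_eval_or, ← hinputs]

lemma wellFounded_wire : WellFounded C.wire :=
  have : IsTrans C.Gate (Relation.TransGen C.wire) := ⟨fun _ _ _ => .trans⟩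
  have : Std.Irrefl (Relation.TransGen C.wire) := ⟨C.acyclic⟩
  (Finite.wellFounded_of_trans_of_irrefl _).mono fun _ _ => Relation.TransGen.single

theorem S_eq_of_forall_gate (T : C.Gate → Set (Finset ι))
    (hvar : ∀ g, C.typ g = .var → T g = {{C.vlab g}})
    (hgate : ∀ g, C.typ g ≠ .var → ∃ l : List C.Gate, l.Nodup ∧ l.toFinset = C.inputs g ∧
      T g = (C.typ g).eval (l.map T)) :
    C.S = T := by
  funext g
  induction g using C.wellFounded_wire.induction with
  | _ g ih =>
  by_cases hg : C.typ g = .var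
  · rw [C.S_of_var hg, hvar g hg]
  · obtain ⟨l, hl, hinputs, hT⟩ := hgate g hg
    rw [C.S_eq_eval hg hl hinputs, hT, List.map_congr_left fun x hx => ih x ?_]
    rw [← C.mem_inputs, ← hinputs, List.mem_toFinset]
    exact hx

end Semantics

section SortedInputs

variable (C : Circuit ι)

open Classical in
noncomputable def sortedInputs (g : C.Gate) : List C.Gate :=
  (C.inputs g).toList.filter (C.ZeroValid ·) ++ (C.inputs g).toList.filter (¬ C.ZeroValid ·)

lemma sortedInputs_perm (g : C.Gate) : (C.sortedInputs g).Perm (C.inputs g).toList := by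
  classical
  simpa [sortedInputs] using List.filter_append_perm (C.ZeroValid ·) (C.inputs g).toList

lemma nodup_sortedInputs (g : C.Gate) : (C.sortedInputs g).Nodup :=
  (C.sortedInputs_perm g).nodup_iff.mpr (Finset.nodup_toList _)

lemma mem_sortedInputs {g x : C.Gate} : x ∈ C.sortedInputs g ↔ C.wire x g := by
  rw [(C.sortedInputs_perm g).mem_iff, Finset.mem_toList, mem_inputs]

lemma toFinset_sortedInputs (g : C.Gate) : (C.sortedInputs g).toFinset = C.inputs g := by
  ext x
  rw [List.mem_toFinset, mem_sortedInputs, mem_inputs]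

lemma length_sortedInputs (g : C.Gate) : (C.sortedInputs g).length = C.fanin g := by
  rw [(C.sortedInputs_perm g).length_eq, Finset.length_toList, fanin]

lemma S_eq_eval_sortedInputs {g : C.Gate} (hg : C.typ g ≠ .var) :
    C.S g = (C.typ g).eval ((C.sortedInputs g).map C.S) :=
  C.S_eq_eval hg (C.nodup_sortedInputs g) (C.toFinset_sortedInputs g)

/-- Junk value `g` when `i` is out of range. -/
noncomputable def input (g : C.Gate) (i : ℕ) : C.Gate :=
  (C.sortedInputs g).getD i g

variable {C}

lemma input_eq_getElem {g : C.Gate} {i : ℕ} (hi : i < C.fanin g) :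
    C.input g i = (C.sortedInputs g)[i]'(by rwa [length_sortedInputs]) :=
  List.getD_eq_getElem _ _ _

lemma wire_input {g : C.Gate} {i : ℕ} (hi : i < C.fanin g) : C.wire (C.input g i) g := by
  rw [input_eq_getElem hi, ← mem_sortedInputs]
  exact List.getElem_mem _

lemma injOn_input (g : C.Gate) : Set.InjOn (C.input g) (Set.Iio (C.fanin g)) :=
  fun i hi j hj h => by
    rwa [input_eq_getElem hi, input_eq_getElem hj,
      (C.nodup_sortedInputs g).getElem_inj_iff] at h

lemma exists_input_eq {g x : C.Gate} (h : C.wire x g) :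
    ∃ i < C.fanin g, C.input g i = x := by
  obtain ⟨i, hi, rfl⟩ := List.getElem_of_mem ((C.mem_sortedInputs).mpr h)
  rw [length_sortedInputs] at hi
  exact ⟨i, hi, input_eq_getElem hi⟩

lemma drop_sortedInputs {g : C.Gate} {i : ℕ} (hi : i < C.fanin g) :
    (C.sortedInputs g).drop i = C.input g i :: (C.sortedInputs g).drop (i + 1) := by
  rw [input_eq_getElem hi]
  exact List.drop_eq_getElem_cons _

lemma mem_drop_sortedInputs {g x : C.Gate} {i : ℕ} :
    x ∈ (C.sortedInputs g).drop i ↔ ∃ j, i ≤ j ∧ j < C.fanin g ∧ C.input g j = x := by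
  rw [List.mem_iff_getElem]
  constructor
  · rintro ⟨j, hj, rfl⟩
    simp only [List.length_drop, length_sortedInputs] at hj
    exact ⟨i + j, by omega, by omega, by rw [input_eq_getElem (by omega), List.getElem_drop]⟩
  · rintro ⟨j, hij, hj, rfl⟩
    refine ⟨j - i, by simp [length_sortedInputs]; omega, ?_⟩
    rw [List.getElem_drop, input_eq_getElem hj]
    congr 1
    omega

lemma zeroValid_input_of_le {g : C.Gate} {i j : ℕ} (hij : i ≤ j) (hj : j < C.fanin g)
    (hzero : C.ZeroValid (C.input g j)) : C.ZeroValid (C.input g i) := by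
  classical
  rw [input_eq_getElem hj] at hzero
  rw [input_eq_getElem (hij.trans_lt hj)]
  exact List.getElem_append_of_le_of_forall (fun x hx => by simpa using (List.mem_filter.mp hx).2)
    (fun x hx => by simpa using (List.mem_filter.mp hx).2) hij _ hzero

end SortedInputs

section Size

variable (C : Circuit ι)

lemma ncard_wires_eq_sum_fanin :
    {p : C.Gate × C.Gate | C.wire p.1 p.2}.ncard = ∑ g, C.fanin g := by
  classical
  have hset : {p : C.Gate × C.Gate | C.wire p.1 p.2} =
      ↑(Finset.univ.filter fun p : C.Gate × C.Gate => C.wire p.1 p.2) := by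
    ext; simp
  rw [hset, Set.ncard_coe_finset,
    Finset.card_eq_sum_card_fiberwise (f := Prod.snd) (t := Finset.univ) fun _ _ => by simp]
  refine Finset.sum_congr rfl fun g _ => ?_
  rw [fanin, ← Finset.card_map (s := C.inputs g) ⟨fun a => (a, g), fun _ _ h => congrArg Prod.fst h⟩]
  refine congrArg Finset.card ?_
  ext ⟨a, b⟩
  simp only [Finset.mem_filter, Finset.mem_univ, true_and, Finset.mem_map, mem_inputs]
  constructor
  · rintro ⟨h, rfl⟩
    exact ⟨a, h, rfl⟩
  · rintro ⟨a', h, he⟩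
    obtain ⟨rfl, rfl⟩ := Prod.mk.inj he
    exact ⟨h, rfl⟩

lemma size_eq_card_add_sum_fanin : C.size = Fintype.card C.Gate + ∑ g, C.fanin g := by
  rw [size, ncard_wires_eq_sum_fanin]

lemma size_le_three_mul_card (h : ∀ g, C.fanin g ≤ 2) : C.size ≤ 3 * Fintype.card C.Gate := by
  have : ∑ g, C.fanin g ≤ ∑ _g : C.Gate, 2 := Finset.sum_le_sum fun g _ => h g
  rw [size_eq_card_add_sum_fanin]
  simp only [Finset.sum_const, Finset.card_univ, smul_eq_mul] at this
  omega

end Size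

section Height

variable (C : Circuit ι)

open Classical in
noncomputable def height (g : C.Gate) : ℕ :=
  (Finset.univ.filter fun x => Relation.TransGen C.wire x g).card

variable {C}

lemma height_lt_of_wire {a b : C.Gate} (h : C.wire a b) : C.height a < C.height b := by
  classical
  refine Finset.card_lt_card ⟨fun x hx => ?_, fun hsub => C.acyclic a ?_⟩
  · simp only [Finset.mem_filter, Finset.mem_univ, true_and] at hx ⊢
    exact hx.tail h
  · simpa using hsub (by simpa using Relation.TransGen.single h)

end Height

section Binarize

variable (C : Circuit ι)

/-- `⟨g, p⟩` combines the sorted inputs of `g` from position `p` on; the last one,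
`p = fanin g - 2`, reads the last two inputs directly. -/
abbrev CombGate : Type := Σ g : C.Gate, Fin (C.fanin g - 1)

abbrev BinGate : Type := C.Gate ⊕ C.CombGate

def baseGate : C.BinGate → C.Gate := Sum.elim id Sigma.fst

/-- The gate of the binarized circuit capturing the inputs of `g` from position `i` on. -/
noncomputable def suffixGate (g : C.Gate) (i : ℕ) : C.BinGate :=
  if h : i + 1 < C.fanin g then .inr ⟨g, ⟨i, by omega⟩⟩ else .inl (C.input g i)

noncomputable def binInputs : C.BinGate → List C.BinGate
  | .inl g => if 0 < C.fanin g then [C.suffixGate g 0] else []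
  | .inr ⟨g, p⟩ => [.inl (C.input g p), C.suffixGate g (p + 1)]

/-- The comb of `g` is ranked between the inputs of `g` and `g`, by decreasing position. -/
noncomputable def binRank : C.BinGate → ℕ ×ₗ ℕ
  | .inl g => toLex (C.height g, C.fanin g)
  | .inr ⟨g, p⟩ => toLex (C.height g, C.fanin g - (p + 1))

variable {C}

lemma binRank_suffixGate_lt {g : C.Gate} {i : ℕ} (hi : i < C.fanin g) :
    C.binRank (C.suffixGate g i) < toLex (C.height g, C.fanin g - i) := by
  unfold suffixGate
  split_ifs
  · simp only [binRank]
    exact Prod.Lex.toLex_lt_toLex.mpr (.inr ⟨rfl, by omega⟩)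
  · exact Prod.Lex.toLex_lt_toLex.mpr (.inl (height_lt_of_wire (wire_input hi)))

lemma binRank_lt_of_mem_binInputs {a b : C.BinGate} (h : a ∈ C.binInputs b) :
    C.binRank a < C.binRank b := by
  rcases b with g | ⟨g, p⟩
  · simp only [binInputs] at h
    split_ifs at h with hg
    · rw [List.mem_singleton.mp h]
      simpa [binRank] using binRank_suffixGate_lt hg
    · simp at h
  · have hp := p.isLt
    simp only [binInputs, List.mem_cons, List.not_mem_nil, or_false] at h
    rcases h with rfl | rfl
    · simp only [binRank]
      exact Prod.Lex.toLex_lt_toLex.mpr (.inl (height_lt_of_wire (wire_input (by omega))))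
    · simpa [binRank, Nat.sub_add_eq] using binRank_suffixGate_lt (i := p + 1) (by omega)

lemma binRank_lt_of_transGen {a b : C.BinGate}
    (h : Relation.TransGen (fun a b => a ∈ C.binInputs b) a b) : C.binRank a < C.binRank b := by
  induction h with
  | single h => exact binRank_lt_of_mem_binInputs h
  | tail _ h ih => exact ih.trans (binRank_lt_of_mem_binInputs h)

lemma fanin_pos_of_combGate (m : C.CombGate) : 1 < C.fanin m.1 := by
  have := m.2.isLt
  omega

lemma typ_combGate_ne_var (m : C.CombGate) : C.typ m.1 ≠ .var := fun h => by
  have := C.fanin_eq_zero_of_var h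
  have := fanin_pos_of_combGate m
  omega

variable (C)

@[reducible] noncomputable def binarize : Circuit ι where
  Gate := C.BinGate
  fintypeGate := inferInstance
  decEqGate := inferInstance
  wire a b := a ∈ C.binInputs b
  decWire _ _ := Classical.dec _
  typ := Sum.elim C.typ fun m => C.typ m.1
  vlab := Sum.elim C.vlab fun m => C.vlab m.1
  output := .inl C.output
  var_no_input := by
    rintro a (g | m) hvar
    · simp [binInputs, C.fanin_eq_zero_of_var hvar]
    · exact absurd hvar (typ_combGate_ne_var m)
  acyclic _ h := lt_irrefl _ (binRank_lt_of_transGen h)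

variable {C}

lemma binarize_wire {a b : C.binarize.Gate} : C.binarize.wire a b ↔ a ∈ C.binInputs b :=
  Iff.rfl

lemma binarize_typ (b : C.BinGate) : C.binarize.typ b = C.typ (C.baseGate b) := by
  rcases b with g | m <;> rfl

lemma inputs_binarize (b : C.binarize.Gate) : C.binarize.inputs b = (C.binInputs b).toFinset := by
  ext a
  rw [mem_inputs, List.mem_toFinset, binarize_wire]

lemma input_ne_of_lt {g : C.Gate} {i j : ℕ} (hij : i < j) (hj : j < C.fanin g) :
    C.input g i ≠ C.input g j :=
  fun h => hij.ne (injOn_input g (hij.trans hj) hj h)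

lemma suffixGate_ne_inl_input {g : C.Gate} {p : ℕ} (hp : p + 1 < C.fanin g) :
    C.suffixGate g (p + 1) ≠ .inl (C.input g p) := by
  unfold suffixGate
  split_ifs
  · simp
  · simpa using (input_ne_of_lt (lt_add_one p) hp).symm

lemma nodup_binInputs (b : C.BinGate) : (C.binInputs b).Nodup := by
  rcases b with g | ⟨g, p⟩
  · simp only [binInputs]
    split_ifs <;> simp
  · have := p.isLt
    simpa [binInputs, eq_comm] using suffixGate_ne_inl_input (g := g) (p := p) (by omega)

lemma fanin_binarize_le_two (b : C.binarize.Gate) : C.binarize.fanin b ≤ 2 := by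
  rw [fanin, inputs_binarize]
  refine (List.toFinset_card_le _).trans ?_
  rcases b with g | ⟨g, p⟩
  · simp only [binInputs]
    split_ifs <;> simp
  · simp [binInputs]

/-- The gates of `C` whose captured sets the gate `b` of the binarized circuit combines. -/
noncomputable def span : C.BinGate → List C.Gate
  | .inl g => [g]
  | .inr ⟨g, p⟩ => (C.sortedInputs g).drop p

lemma span_suffixGate {g : C.Gate} {i : ℕ} (hi : i < C.fanin g) :
    C.span (C.suffixGate g i) = (C.sortedInputs g).drop i := by
  unfold suffixGate
  split_ifs
  · rfl
  · rw [drop_sortedInputs hi, List.drop_eq_nil_of_le (by rw [length_sortedInputs]; omega)]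
    rfl

variable (C) in
noncomputable def binSem (b : C.BinGate) : Set (Finset ι) :=
  (C.typ (C.baseGate b)).eval ((C.span b).map C.S)

lemma binSem_inl (g : C.Gate) : C.binSem (.inl g) = C.S g :=
  GateType.eval_singleton _ _

lemma binSem_suffixGate {g : C.Gate} {i : ℕ} (hi : i < C.fanin g) :
    C.binSem (C.suffixGate g i) = (C.typ g).eval (((C.sortedInputs g).drop i).map C.S) := by
  rw [binSem, span_suffixGate hi]
  unfold suffixGate
  split_ifs
  · rfl
  · rw [drop_sortedInputs hi, List.drop_eq_nil_of_le (by rw [length_sortedInputs]; omega)]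
    simp only [List.map_singleton, GateType.eval_singleton]

lemma binSem_eq_eval_binInputs {b : C.BinGate} (hb : C.typ (C.baseGate b) ≠ .var) :
    C.binSem b = (C.typ (C.baseGate b)).eval ((C.binInputs b).map C.binSem) := by
  rcases b with g | ⟨g, p⟩
  · change C.typ g ≠ .var at hb
    change C.binSem (.inl g) = (C.typ g).eval _
    rw [binSem_inl, C.S_eq_eval_sortedInputs hb, binInputs]
    split_ifs with hpos
    · rw [List.map_singleton, GateType.eval_singleton, binSem_suffixGate hpos, List.drop_zero]
    · rw [List.eq_nil_of_length_eq_zero (l := C.sortedInputs g)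
        (by rw [length_sortedInputs]; omega)]
      rfl
  · have hp := p.isLt
    change (C.typ g).eval (((C.sortedInputs g).drop p).map C.S) = (C.typ g).eval _
    rw [binInputs, List.map_cons, List.map_singleton, binSem_inl,
      binSem_suffixGate (by omega), GateType.eval_pair, drop_sortedInputs (by omega),
      List.map_cons]

theorem S_binarize : C.binarize.S = C.binSem := by
  refine C.binarize.S_eq_of_forall_gate _ (fun b hb => ?_) fun b hb =>
    ⟨C.binInputs b, nodup_binInputs b, (inputs_binarize b).symm, ?_⟩
  · rcases b with g | m
    · rw [binSem_inl, C.S_of_var hb]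
      rfl
    · exact absurd hb (typ_combGate_ne_var m)
  · rw [binarize_typ] at hb ⊢
    exact binSem_eq_eval_binInputs hb

lemma S_binarize_inl (g : C.Gate) : C.binarize.S (.inl g) = C.S g := by
  rw [S_binarize, binSem_inl]

lemma captured_binarize : C.binarize.captured = C.captured :=
  S_binarize_inl C.output

lemma varInj_binarize (h : C.VarInj) : C.binarize.VarInj := by
  rintro (g | m) hg (g' | m') hg' heq
  · rw [h hg hg' heq]
  · exact absurd hg' (typ_combGate_ne_var m')
  all_goals exact absurd hg (typ_combGate_ne_var m)

lemma card_binarize_le_size : Fintype.card C.binarize.Gate ≤ C.size := by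
  have hcomb : ∑ g, (C.fanin g - 1) ≤ ∑ g, C.fanin g :=
    Finset.sum_le_sum fun g _ => Nat.sub_le _ _
  change Fintype.card (C.Gate ⊕ C.CombGate) ≤ _
  rw [Fintype.card_sum, Fintype.card_sigma, size_eq_card_add_sum_fanin]
  simpa using hcomb

lemma size_binarize_le : C.binarize.size ≤ 3 * C.size :=
  (C.binarize.size_le_three_mul_card fanin_binarize_le_two).trans
    (Nat.mul_le_mul_left 3 card_binarize_le_size)

lemma combGate_ext {m m' : C.CombGate} (h : m.1 = m'.1) (h' : (m.2 : ℕ) = m'.2) : m = m' := by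
  obtain ⟨g, p⟩ := m
  obtain ⟨g', p'⟩ := m'
  subst h
  simp only [Sigma.mk.injEq, heq_eq_eq, true_and]
  exact Fin.ext h'

lemma eq_of_suffixGate_eq_inr {g : C.Gate} {i : ℕ} {m : C.CombGate}
    (h : C.suffixGate g i = .inr m) : m.1 = g ∧ (m.2 : ℕ) = i := by
  unfold suffixGate at h
  split_ifs at h
  cases h
  exact ⟨rfl, rfl⟩

lemma eq_of_suffixGate_eq_inl {g x : C.Gate} {i : ℕ} (h : C.suffixGate g i = .inl x) :
    C.fanin g ≤ i + 1 ∧ C.input g i = x := by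
  unfold suffixGate at h
  split_ifs at h with hi
  cases h
  exact ⟨by omega, rfl⟩

lemma inr_mem_binInputs {m : C.CombGate} {b : C.BinGate} (h : .inr m ∈ C.binInputs b) :
    (b = .inl m.1 ∧ (m.2 : ℕ) = 0) ∨
      ∃ q : C.CombGate, b = .inr q ∧ q.1 = m.1 ∧ (m.2 : ℕ) = q.2 + 1 := by
  rcases b with g | q
  · simp only [binInputs] at h
    split_ifs at h
    · obtain ⟨rfl, h0⟩ := eq_of_suffixGate_eq_inr (List.mem_singleton.mp h).symm
      exact .inl ⟨rfl, h0⟩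
    · simp at h
  · simp only [binInputs, List.mem_cons, List.not_mem_nil, or_false, reduceCtorEq,
      false_or] at h
    obtain ⟨h1, h2⟩ := eq_of_suffixGate_eq_inr h.symm
    exact .inr ⟨q, rfl, h1.symm, h2⟩

lemma eq_of_inr_mem_binInputs {m : C.CombGate} {b₁ b₂ : C.BinGate}
    (h₁ : .inr m ∈ C.binInputs b₁) (h₂ : .inr m ∈ C.binInputs b₂) : b₁ = b₂ := by
  rcases inr_mem_binInputs h₁ with ⟨rfl, h₁⟩ | ⟨q₁, rfl, hq₁, h₁⟩ <;>
    rcases inr_mem_binInputs h₂ with ⟨rfl, h₂⟩ | ⟨q₂, rfl, hq₂, h₂⟩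
  · rfl
  · omega
  · omega
  · exact congrArg Sum.inr (combGate_ext (hq₁.trans hq₂.symm) (by omega))

variable (C) in
/-- The gate of the binarized circuit reading the `i`-th sorted input of `g`. -/
noncomputable def reader (g : C.Gate) (i : ℕ) : C.BinGate :=
  if h : 1 < C.fanin g then .inr ⟨g, ⟨min i (C.fanin g - 2), by omega⟩⟩ else .inl g

@[simp] lemma baseGate_reader (g : C.Gate) (i : ℕ) : C.baseGate (C.reader g i) = g := by
  unfold reader
  split_ifs <;> rfl

lemma inl_mem_binInputs {x : C.Gate} {b : C.BinGate} (h : .inl x ∈ C.binInputs b) :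
    ∃ g, ∃ i < C.fanin g, C.input g i = x ∧ b = C.reader g i := by
  rcases b with g | ⟨g, p⟩
  · simp only [binInputs] at h
    split_ifs at h with hpos
    · obtain ⟨hle, rfl⟩ := eq_of_suffixGate_eq_inl (List.mem_singleton.mp h).symm
      exact ⟨g, 0, hpos, rfl, by rw [reader, dif_neg (by omega)]⟩
    · simp at h
  · have hp := p.isLt
    simp only [binInputs, List.mem_cons, List.not_mem_nil, or_false] at h
    rcases h with h | h
    · refine ⟨g, p, by omega, (Sum.inl.inj h).symm, ?_⟩
      rw [reader, dif_pos (by omega)]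
      exact congrArg Sum.inr (combGate_ext rfl (by simp; omega))
    · obtain ⟨hle, rfl⟩ := eq_of_suffixGate_eq_inl h.symm
      refine ⟨g, p + 1, by omega, rfl, ?_⟩
      rw [reader, dif_pos (by omega)]
      exact congrArg Sum.inr (combGate_ext rfl (by simp; omega))

lemma eq_of_inl_mem_binInputs {x : C.Gate} {b₁ b₂ : C.BinGate}
    (h₁ : .inl x ∈ C.binInputs b₁) (h₂ : .inl x ∈ C.binInputs b₂)
    (hbase : C.baseGate b₁ = C.baseGate b₂) : b₁ = b₂ := by
  obtain ⟨g, i₁, hi₁, rfl, rfl⟩ := inl_mem_binInputs h₁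
  obtain ⟨g', i₂, hi₂, hx, rfl⟩ := inl_mem_binInputs h₂
  simp only [baseGate_reader] at hbase
  subst hbase
  rw [injOn_input g hi₁ hi₂ hx.symm]

lemma zeroValid_input_of_zeroValid_suffixGate {g : C.Gate} (hg : C.typ g = .and) {i j : ℕ}
    (hij : i ≤ j) (hj : j < C.fanin g) (h : C.binarize.ZeroValid (C.suffixGate g i)) :
    C.ZeroValid (C.input g j) := by
  rw [ZeroValid, S_binarize, binSem_suffixGate (hij.trans_lt hj), hg,
    GateType.empty_mem_eval_and] at h
  exact h _ (List.mem_map_of_mem (mem_drop_sortedInputs.mpr ⟨j, hij, hj, rfl⟩))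

/-- Since the 0-valid inputs come first, the second input of the reader of the `i`-th input
of an AND-gate is 0-valid only if all inputs at positions other than `i` are. -/
lemma zeroValid_input_of_forall_zeroValid {g : C.Gate} (hg : C.typ g = .and) {i : ℕ}
    (hi : i < C.fanin g)
    (hzero : ∀ y ∈ C.binarize.inputs (C.reader g i), y ≠ .inl (C.input g i) →
      C.binarize.ZeroValid y) {j : ℕ} (hj : j < C.fanin g) (hji : j ≠ i) :
    C.ZeroValid (C.input g j) := by
  have hk : 1 < C.fanin g := by omega
  simp only [reader, dif_pos hk, inputs_binarize, List.mem_toFinset, binInputs,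
    List.mem_cons, List.not_mem_nil, or_false] at hzero
  by_cases hik : i + 1 < C.fanin g
  · rw [min_eq_left (by omega)] at hzero
    have hzero_last := zeroValid_input_of_zeroValid_suffixGate hg (j := C.fanin g - 1)
      (by omega) (by omega) (hzero _ (.inr rfl) (suffixGate_ne_inl_input hik))
    exact zeroValid_input_of_le (by omega) (by omega) hzero_last
  · rw [min_eq_right (by omega)] at hzero
    have hne := input_ne_of_lt (show C.fanin g - 2 < i by omega) hi
    have hzero_last := hzero _ (.inl rfl) (by simpa using hne)
    rw [ZeroValid, S_binarize_inl] at hzero_last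
    exact zeroValid_input_of_le (by omega) (by omega) hzero_last

lemma pureWire_of_pureWire_binarize {x : C.Gate} {b : C.BinGate}
    (h : C.binarize.PureWire (.inl x) b) : C.PureWire x (C.baseGate b) := by
  obtain ⟨hw, htyp⟩ := h
  obtain ⟨g, i, hi, rfl, rfl⟩ := inl_mem_binInputs hw
  rw [binarize_typ, baseGate_reader] at htyp
  rw [baseGate_reader]
  refine ⟨wire_input hi, htyp.imp_right fun ⟨hand, hzero⟩ => ⟨hand, fun y hy hne => ?_⟩⟩
  obtain ⟨j, hj, rfl⟩ := exists_input_eq (C.mem_inputs.mp hy)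
  exact zeroValid_input_of_forall_zeroValid hand hi hzero hj (by rintro rfl; exact hne rfl)

theorem upwardsDeterministic_binarize (h : C.UpwardsDeterministic) :
    C.binarize.UpwardsDeterministic := by
  rintro (x | m) hx
  · refine (h x hx).imp (fun hS => by rwa [S_binarize_inl]) fun huniq b₁ b₂ h₁ h₂ => ?_
    exact eq_of_inl_mem_binInputs h₁.1 h₂.1
      (huniq _ _ (pureWire_of_pureWire_binarize h₁) (pureWire_of_pureWire_binarize h₂))
  · exact .inr fun b₁ b₂ h₁ h₂ => eq_of_inr_mem_binInputs h₁.1 h₂.1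

lemma eq_of_mem_binInputs_inl {g : C.Gate} {a₁ a₂ : C.BinGate}
    (h₁ : a₁ ∈ C.binInputs (.inl g)) (h₂ : a₂ ∈ C.binInputs (.inl g)) : a₁ = a₂ := by
  simp only [binInputs] at h₁ h₂
  split_ifs at h₁ h₂
  · exact (List.mem_singleton.mp h₁).trans (List.mem_singleton.mp h₂).symm
  · simp at h₁

lemma mem_binInputs_inr {g : C.Gate} {p : Fin (C.fanin g - 1)} {a : C.BinGate}
    (h : a ∈ C.binInputs (.inr ⟨g, p⟩)) :
    a = .inl (C.input g p) ∨ a = C.suffixGate g (p + 1) := by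
  simpa [binInputs] using h

lemma exists_reaches_of_mem_binInputs {a b : C.BinGate} (h : a ∈ C.binInputs b) {y : C.Gate}
    (hy : y ∈ C.span a) : ∃ z ∈ C.span b, C.Reaches y z := by
  rcases b with g | ⟨g, p⟩
  · simp only [binInputs] at h
    split_ifs at h with hpos
    · rw [List.mem_singleton.mp h, span_suffixGate hpos, List.drop_zero,
        mem_sortedInputs] at hy
      exact ⟨g, List.mem_singleton_self g, .single hy⟩
    · simp at h
  · have hp := p.isLt
    refine ⟨y, ?_, .refl⟩
    simp only [binInputs, List.mem_cons, List.not_mem_nil, or_false] at h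
    rcases h with rfl | rfl
    · rw [List.mem_singleton.mp hy]
      exact mem_drop_sortedInputs.mpr ⟨p, le_rfl, by omega, rfl⟩
    · rw [span_suffixGate (by omega)] at hy
      exact List.drop_subset_drop_left _ (Nat.le_succ p) hy

lemma exists_reaches_of_binarize_reaches {a b : C.BinGate} (h : C.binarize.Reaches a b)
    {y : C.Gate} (hy : y ∈ C.span a) : ∃ z ∈ C.span b, C.Reaches y z := by
  induction h with
  | refl => exact ⟨y, hy, .refl⟩
  | tail _ hw ih =>
    obtain ⟨z, hz, hyz⟩ := ih
    obtain ⟨w, hw, hzw⟩ := exists_reaches_of_mem_binInputs hw hz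
    exact ⟨w, hw, hyz.trans hzw⟩

lemma decomposableAnd_binarize {b : C.BinGate} (hd : C.DecomposableAnd (C.baseGate b)) :
    C.binarize.DecomposableAnd b := by
  intro v a₁ a₂ hv h₁ h₂ hne hr₁ hr₂
  rw [inputs_binarize, List.mem_toFinset] at h₁ h₂
  rcases b with g | ⟨g, p⟩
  · exact hne (eq_of_mem_binInputs_inl h₁ h₂)
  change C.DecomposableAnd g at hd
  rcases v with v | m
  swap
  · exact typ_combGate_ne_var m hv
  have hp := p.isLt
  have key : C.binarize.Reaches (.inl v) (.inl (C.input g p)) →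
      C.binarize.Reaches (.inl v) (C.suffixGate g (p + 1)) → False := fun hr hr' => by
    obtain ⟨z, hz, hvz⟩ := exists_reaches_of_binarize_reaches hr (List.mem_singleton_self v)
    obtain ⟨z', hz', hvz'⟩ := exists_reaches_of_binarize_reaches hr' (List.mem_singleton_self v)
    rw [span, List.mem_singleton] at hz
    rw [span_suffixGate (by omega), mem_drop_sortedInputs] at hz'
    obtain ⟨j, hpj, hj, rfl⟩ := hz'
    subst hz
    exact hd v _ _ hv ((C.mem_inputs).mpr (wire_input (by omega)))
      ((C.mem_inputs).mpr (wire_input hj)) (input_ne_of_lt (by omega) hj) hvz hvz'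
  rcases mem_binInputs_inr h₁ with rfl | rfl <;> rcases mem_binInputs_inr h₂ with rfl | rfl
  · exact hne rfl
  · exact key hr₁ hr₂
  · exact key hr₂ hr₁
  · exact hne rfl

lemma deterministicOr_binarize {b : C.BinGate} (hb : C.binarize.typ b = .or)
    (hd : C.DeterministicOr (C.baseGate b)) : C.binarize.DeterministicOr b := by
  intro a₁ a₂ h₁ h₂ hne
  rw [inputs_binarize, List.mem_toFinset] at h₁ h₂
  rcases b with g | ⟨g, p⟩
  · exact absurd (eq_of_mem_binInputs_inl h₁ h₂) hne
  change C.DeterministicOr g at hd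
  have hp := p.isLt
  have hg : C.typ g = .or := hb
  have key : Disjoint (C.binarize.S (.inl (C.input g p)))
      (C.binarize.S (C.suffixGate g (p + 1))) := by
    rw [S_binarize_inl, S_binarize, binSem_suffixGate (by omega), hg]
    refine Set.disjoint_left.mpr fun t ht ht' => ?_
    obtain ⟨_, hA, htA⟩ := GateType.mem_eval_or.mp ht'
    obtain ⟨y, hy, rfl⟩ := List.mem_map.mp hA
    obtain ⟨j, hpj, hj, rfl⟩ := mem_drop_sortedInputs.mp hy
    exact Set.disjoint_left.mp (hd _ _ ((C.mem_inputs).mpr (wire_input (by omega)))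
      ((C.mem_inputs).mpr (wire_input hj)) (input_ne_of_lt (by omega) hj)) ht htA
  rcases mem_binInputs_inr h₁ with rfl | rfl <;> rcases mem_binInputs_inr h₂ with rfl | rfl
  · exact absurd rfl hne
  · exact key
  · exact key.symm
  · exact absurd rfl hne

theorem dDNNF_binarize (h : C.dDNNF) : C.binarize.dDNNF :=
  ⟨fun b hb => decomposableAnd_binarize (h.1 _ (by rwa [← binarize_typ])),
    fun b hb => deterministicOr_binarize hb (h.2 _ (by rwa [← binarize_typ]))⟩

end Binarize

end Circuit

/-- Reduction to arity-two preserving upwards-determinism: there is a universal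
constant `c` such that every monotone circuit `C` in zero-suppressed semantics that is
upwards-deterministic admits a monotone circuit `C'` with `S(C') = S(C)`, every gate of
fan-in at most two, and `|C'| ≤ c·|C|`, such that `C'` is upwards-deterministic;
moreover, if `C` is a d-DNNF in zero-suppressed semantics, then `C'` can be chosen to
also be one. -/
theorem stmt17 :
    ∃ c : ℕ, 0 < c ∧
      ∀ (ι : Type) [DecidableEq ι] (C : Circuit ι),
        C.VarInj → C.UpwardsDeterministic →
        ∃ C' : Circuit ι,
          C'.VarInj ∧
          C'.captured = C.captured ∧
          (∀ g : C'.Gate, C'.fanin g ≤ 2) ∧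
          C'.size ≤ c * C.size ∧
          C'.UpwardsDeterministic ∧
          (C.dDNNF → C'.dDNNF) :=
  ⟨3, by norm_num, fun _ _ C hinj hdet =>
    ⟨C.binarize, Circuit.varInj_binarize hinj, Circuit.captured_binarize,
      Circuit.fanin_binarize_le_two, Circuit.size_binarize_le,
      Circuit.upwardsDeterministic_binarize hdet, Circuit.dDNNF_binarize⟩⟩
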